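/- Every functor F : C ⥤ D between categories factors, up to natural isomorphism, as a composite F ≅ F₁ ⋙ F₂ ⋙ F₃, where F₁ is full and essentially surjective (forgets at most stuff), F₂ is faithful and essentially surjective (forgets at most structure), and F₃ is full and faithful (forgets at most properties). -/

import Mathlib

open CategoryTheory

universe v₁ v₂ u₁ u₂

/-!
Factor `F` through its essential image, whose inclusion into `D` is fully faithful, and factor
the essentially surjective corestriction `F.toEssImage` through the quotient of `C` by its kernel
relation `f ~ g ↔ F.map f = F.map g`: the quotient functor is full and bijective on objects, and
the functor it induces on the quotient is faithful and still essentially surjective. All three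
factors are identities on objects and compose to `F` on the nose; `AsSmall` only moves the two
intermediate categories into a common universe.
-/

namespace CategoryTheory.AsSmall

instance up_isEquivalence {C : Type u₁} [Category.{v₁} C] :
    (up : C ⥤ AsSmall.{v₂} C).IsEquivalence :=
  equiv.isEquivalence_functor

instance down_isEquivalence {C : Type u₁} [Category.{v₁} C] :
    (down : AsSmall.{v₂} C ⥤ C).IsEquivalence :=
  equiv.isEquivalence_inverse

end CategoryTheory.AsSmall

/-- Every functor `F : C ⥤ D` factors, up to natural isomorphism, as
`F ≅ F₁ ⋙ F₂ ⋙ F₃`, where `F₁` is full and essentially surjective (forgets at most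
stuff), `F₂` is faithful and essentially surjective (forgets at most structure), and
`F₃` is full and faithful (forgets at most properties). -/
theorem functor_factorization_stuff_structure_properties
    {C : Type u₁} [Category.{v₁} C] {D : Type u₂} [Category.{v₂} D] (F : C ⥤ D) :
    ∃ (B₁ B₂ : Cat.{max u₁ u₂ v₁ v₂, max u₁ u₂ v₁ v₂})
      (F₁ : C ⥤ B₁) (F₂ : B₁ ⥤ B₂) (F₃ : B₂ ⥤ D),
      F₁.Full ∧ F₁.EssSurj ∧ F₂.Faithful ∧ F₂.EssSurj ∧ F₃.Full ∧ F₃.Faithful ∧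
        Nonempty (F ≅ F₁ ⋙ F₂ ⋙ F₃) := by
  let r := F.toEssImage.homRel
  let B₁ := AsSmall.{max u₁ u₂ v₁ v₂} (CategoryTheory.Quotient r)
  let B₂ := AsSmall.{max u₁ u₂ v₁ v₂} F.EssImageSubcategory
  let F₁ : C ⥤ B₁ := CategoryTheory.Quotient.functor r ⋙ AsSmall.up
  let F₂ : B₁ ⥤ B₂ :=
    AsSmall.down ⋙ CategoryTheory.Quotient.lift r F.toEssImage (fun _ _ _ _ h => h) ⋙ AsSmall.up
  let F₃ : B₂ ⥤ D := AsSmall.down ⋙ F.essImage.ι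
  exact ⟨.of B₁, .of B₂, F₁, F₂, F₃, inferInstanceAs F₁.Full, inferInstanceAs F₁.EssSurj,
    inferInstanceAs F₂.Faithful, inferInstanceAs F₂.EssSurj, inferInstanceAs F₃.Full,
    inferInstanceAs F₃.Faithful, ⟨Iso.refl F⟩⟩
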